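/- Let d₁, d₂ > 0, 0 < β < 1, c > 0, ℓ > 0, λ ∈ (0, 1/β), and n ≥ 1. If c > c_d(λ) := (d₂/d₁)(1 − βλ)(1 − 1/√(1+λ))², then D_n(λ, c) := c(1 − βλ)/(1 + λ) + (d₁c − d₂λ(1 − βλ)/(1 + λ))·n²/ℓ² + d₁d₂ n⁴/ℓ⁴ > 0. -/
import Mathlib


set_option maxHeartbeats 1000000 in
theorem Dn_pos (d₁ d₂ β c ℓ l : ℝ) (hd₁ : 0 < d₁) (hd₂ : 0 < d₂)
    (hβ0 : 0 < β) (hβ1 : β < 1) (hc : 0 < c) (hℓ : 0 < ℓ)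
    (hl : l ∈ Set.Ioo 0 (1 / β)) (n : ℕ) (hn : 1 ≤ n)
    (hturing : c > (d₂ / d₁) * (1 - β * l) * (1 - 1 / Real.sqrt (1 + l)) ^ 2) :
    0 < c * (1 - β * l) / (1 + l)
        + (d₁ * c - d₂ * l * (1 - β * l) / (1 + l)) * (n : ℝ) ^ 2 / ℓ ^ 2
        + d₁ * d₂ * (n : ℝ) ^ 4 / ℓ ^ 4 := by
  obtain ⟨hl0, hlβ⟩ := hl
  have hβl : β * l < 1 := by
    have := (lt_div_iff₀ hβ0).mp hlβ
    linarith
  have h1βl : 0 < 1 - β * l := by linarith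
  have h1l : (0:ℝ) < 1 + l := by linarith
  set s := Real.sqrt (1 + l) with hs
  have hs2 : s ^ 2 = 1 + l := Real.sq_sqrt (by linarith)
  have hs1 : 1 < s := by
    have h := Real.sqrt_lt_sqrt (by norm_num) (show (1:ℝ) < 1 + l by linarith)
    simpa using h
  have hs0 : (0:ℝ) < s := by linarith
  -- rewrite the turing condition
  have hrw : (1 - 1 / s) ^ 2 = (s - 1) ^ 2 / (1 + l) := by
    rw [← hs2]; field_simp
  rw [hrw] at hturing
  have hkey : d₂ * (1 - β * l) * (s - 1) ^ 2 < d₁ * c * (1 + l) := by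
    have h := mul_lt_mul_of_pos_right hturing (mul_pos hd₁ h1l)
    have e : d₂ / d₁ * (1 - β * l) * ((s - 1) ^ 2 / (1 + l)) * (d₁ * (1 + l))
        = d₂ * (1 - β * l) * (s - 1) ^ 2 := by
      field_simp
    nlinarith [h, e]
  set X := Real.sqrt (d₁ * c * (1 + l)) with hX
  set Y := Real.sqrt (d₂ * (1 - β * l)) with hY
  have hXnn : 0 ≤ X := Real.sqrt_nonneg _
  have hYnn : 0 ≤ Y := Real.sqrt_nonneg _
  have hX2 : X ^ 2 = d₁ * c * (1 + l) := Real.sq_sqrt (by positivity)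
  have hY2 : Y ^ 2 = d₂ * (1 - β * l) := Real.sq_sqrt (by positivity)
  have hXY : Y * (s - 1) < X := by
    by_contra h
    push_neg at h
    have h1 : 0 ≤ Y * (s - 1) := by nlinarith
    nlinarith
  have hmain : 0 < 2 * X * Y + X ^ 2 - Y ^ 2 * (s ^ 2 - 1) := by
    have h1 : 0 < X - Y * (s - 1) := by linarith
    have h2 : 0 < X + Y * (s + 1) := by nlinarith
    have h4 : (X - Y * (s - 1)) * (X + Y * (s + 1))
        = 2 * X * Y + X ^ 2 - Y ^ 2 * (s ^ 2 - 1) := by ring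
    linarith [mul_pos h1 h2, h4]
  set μ : ℝ := (n : ℝ) ^ 2 / ℓ ^ 2 with hμdef
  have hn0 : (0:ℝ) < (n:ℝ) := by exact_mod_cast hn
  have hμ : 0 < μ := by positivity
  set a := Real.sqrt (d₁ * d₂ * (1 + l)) with ha
  set g := Real.sqrt (c * (1 - β * l)) with hg
  have ha2 : a ^ 2 = d₁ * d₂ * (1 + l) := Real.sq_sqrt (by positivity)
  have hg2 : g ^ 2 = c * (1 - β * l) := Real.sq_sqrt (by positivity)
  have hag : a * g = X * Y := by
    rw [ha, hg, hX, hY, ← Real.sqrt_mul (by positivity), ← Real.sqrt_mul (by positivity)]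
    congr 1
    ring
  clear_value s X Y a g μ
  have hE : 0 < c * (1 - β * l) + (d₁ * c * (1 + l) - d₂ * l * (1 - β * l)) * μ
      + d₁ * d₂ * (1 + l) * μ ^ 2 := by
    have hid : c * (1 - β * l) + (d₁ * c * (1 + l) - d₂ * l * (1 - β * l)) * μ
        + d₁ * d₂ * (1 + l) * μ ^ 2
        = (a * μ - g) ^ 2 + μ * (2 * X * Y + X ^ 2 - Y ^ 2 * (s ^ 2 - 1)) := by
      linear_combination (-μ^2) * ha2 + (-1 : ℝ) * hg2 + (2*μ) * hag
        + (-μ) * hX2 + (l*μ) * hY2 + (Y^2*μ) * hs2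
    rw [hid]
    exact add_pos_of_nonneg_of_pos (sq_nonneg _) (mul_pos hμ hmain)
  have hfinal : (1 + l) * (c * (1 - β * l) / (1 + l)
        + (d₁ * c - d₂ * l * (1 - β * l) / (1 + l)) * (n : ℝ) ^ 2 / ℓ ^ 2
        + d₁ * d₂ * (n : ℝ) ^ 4 / ℓ ^ 4)
      = c * (1 - β * l) + (d₁ * c * (1 + l) - d₂ * l * (1 - β * l)) * μ
        + d₁ * d₂ * (1 + l) * μ ^ 2 := by
    rw [hμdef]
    field_simp
  have hG : 0 < (1 + l) * (c * (1 - β * l) / (1 + l)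
        + (d₁ * c - d₂ * l * (1 - β * l) / (1 + l)) * (n : ℝ) ^ 2 / ℓ ^ 2
        + d₁ * d₂ * (n : ℝ) ^ 4 / ℓ ^ 4) := by rw [hfinal]; exact hE
  nlinarith [hG, h1l]
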